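/- Let N ≥ 2 be an integer, r > 0 a real number, and k ≥ 0 an integer. Then (r/(1+r)) · (A(r)^k)_{1,N−1} = (r^{(N−1)/2}/N) · (2√r/(1+r))^{k+1} · ∑_{ℓ=1}^{N−1} (−1)^{ℓ+1} · cos^k(ℓπ/N) · sin²(ℓπ/N). -/

import Mathlib

/-!
Write `r = s²`. Then `A(r) = (2s/(1+s²)) D⁻¹ T D` with `D = diag(s^a)` and `T` the tridiagonal
matrix with `1/2` off the diagonal, whose eigenvectors `(sin(aℓπ/N))_a` are orthogonal of squared
norm `N/2`, with eigenvalues `cos(ℓπ/N)`. Hence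
`(A^k)_{a,b} = s^(b-a) (2s/(1+s²))^k (2/N) ∑_ℓ cos^k(ℓπ/N) sin(aℓπ/N) sin(bℓπ/N)`,
which is proved by induction on `k`: the base case is the discrete orthogonality of the sines,
the step is `sin((b-1)x) + sin((b+1)x) = 2 cos x sin(bx)`, whose boundary terms vanish at
`b = 0` and `b = N`. For `a = 1`, `b = N-1` one has `sin((N-1)ℓπ/N) = (-1)^(ℓ+1) sin(ℓπ/N)`.
-/

open Real Finset

/-- The `(N−1)×(N−1)` matrix `A(r)` (rows and columns indexed by `{1,…,N−1}`, realized as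
`Fin (N-1)` via `m ↦ m+1`) with `A(r)_{i,j} = r/(1+r)` if `j = i+1`, `1/(1+r)` if
`j = i−1`, and `0` otherwise. -/
noncomputable def Ar (N : ℕ) (r : ℝ) : Matrix (Fin (N - 1)) (Fin (N - 1)) ℝ :=
  fun i j =>
    if (i : ℕ) + 1 = (j : ℕ) then r / (1 + r)
    else if (j : ℕ) + 1 = (i : ℕ) then 1 / (1 + r)
    else 0

theorem sum_range_cos_mul_of_sin_eq_zero {θ : ℝ} (n : ℕ) (hθ : sin (θ / 2) ≠ 0)
    (hnθ : sin (n * θ) = 0) :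
    ∑ ℓ ∈ range n, cos (ℓ * θ) = (1 - cos (n * θ)) / 2 := by
  have h := two_mul_sin_mul_cos (n * θ / 2) ((n - 1) * θ / 2)
  rw [show n * θ / 2 - (n - 1) * θ / 2 = θ / 2 by ring,
    show n * θ / 2 + (n - 1) * θ / 2 = n * θ - θ / 2 by ring, sin_sub, hnθ] at h
  apply mul_left_cancel₀ hθ
  calc sin (θ / 2) * ∑ ℓ ∈ range n, cos (ℓ * θ)
      = sin (n * θ / 2) * cos ((n - 1) * θ / 2) := by
        simpa [mul_comm θ] using sin_mul_sum_cos n θ 0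
    _ = sin (θ / 2) * ((1 - cos (n * θ)) / 2) := by linear_combination h / 2

theorem sin_int_mul_pi_div_ne_zero {N : ℕ} {m : ℤ} (hm0 : m ≠ 0) (hm : |m| < N) :
    sin (m * π / N) ≠ 0 := by
  have hN : (0 : ℝ) < N := by exact_mod_cast (abs_nonneg m).trans_lt hm
  have hm' : |(m : ℝ)| < N := by exact_mod_cast hm
  rw [Ne, sin_eq_zero_iff_of_lt_of_lt]
  · positivity
  · rw [lt_div_iff₀ hN]; nlinarith [neg_abs_le (m : ℝ), pi_pos]
  · rw [div_lt_iff₀ hN]; nlinarith [le_abs_self (m : ℝ), pi_pos]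

theorem sum_range_cos_int_mul_pi_div {N : ℕ} {m : ℤ} (hm0 : m ≠ 0) (hm : |m| < 2 * N) :
    ∑ ℓ ∈ range N, cos (m * (ℓ * π / N)) = (1 - cos (m * π)) / 2 := by
  have hN : (N : ℝ) ≠ 0 := by
    have : (0 : ℤ) < 2 * N := (abs_nonneg m).trans_lt hm
    exact_mod_cast (show N ≠ 0 by omega)
  have hNθ : (N : ℝ) * (m * π / N) = m * π := by field_simp
  have hcomm (ℓ : ℕ) : (m : ℝ) * (ℓ * π / N) = ℓ * (m * π / N) := by ring
  simp_rw [hcomm]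
  rw [sum_range_cos_mul_of_sin_eq_zero, hNθ]
  · have := sin_int_mul_pi_div_ne_zero (N := 2 * N) hm0 (by exact_mod_cast hm)
    rwa [div_div, mul_comm (N : ℝ) 2, ← Nat.cast_ofNat, ← Nat.cast_mul]
  · rw [hNθ, sin_int_mul_pi]

theorem sum_range_sin_mul_sin {N a b : ℕ} (ha : 0 < a) (ha' : a < N) (hb : 0 < b) (hb' : b < N) :
    ∑ ℓ ∈ range N, sin (a * (ℓ * π / N)) * sin (b * (ℓ * π / N)) =
      if a = b then (N : ℝ) / 2 else 0 := by
  have hprod (x : ℝ) : sin (a * x) * sin (b * x) =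
      (cos (((a - b : ℤ) : ℝ) * x) - cos (((a + b : ℤ) : ℝ) * x)) / 2 := by
    have := two_mul_sin_mul_sin (a * x) (b * x)
    push_cast; rw [sub_mul, add_mul]; linarith
  have hsum : ∑ ℓ ∈ range N, cos (((a + b : ℤ) : ℝ) * (ℓ * π / N)) =
      (1 - cos ((a - b : ℤ) * π)) / 2 := by
    rw [sum_range_cos_int_mul_pi_div (by omega) (by rw [abs_lt]; omega),
      ← cos_add_nat_mul_two_pi (((a - b : ℤ) : ℝ) * π) b]
    congr 3
    push_cast; ring
  simp_rw [hprod, ← sum_div, sum_sub_distrib, hsum]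
  split_ifs with hab
  · subst hab
    simp
  · rw [sum_range_cos_int_mul_pi_div (by omega) (by rw [abs_lt]; omega)]
    ring

noncomputable def sineMoment (N k a b : ℕ) : ℝ :=
  ∑ ℓ ∈ Icc 1 (N - 1), cos (ℓ * π / N) ^ k * sin (a * (ℓ * π / N)) * sin (b * (ℓ * π / N))

@[simp]
theorem sineMoment_zero_right (N k a : ℕ) : sineMoment N k a 0 = 0 := by
  simp [sineMoment]

theorem sineMoment_self_right {N : ℕ} (hN : N ≠ 0) (k a : ℕ) : sineMoment N k a N = 0 := by
  refine sum_eq_zero fun ℓ _ => ?_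
  rw [show (N : ℝ) * (ℓ * π / N) = ℓ * π by field_simp, sin_nat_mul_pi, mul_zero]

theorem sineMoment_add_sineMoment_add_two (N k a b : ℕ) :
    sineMoment N k a b + sineMoment N k a (b + 2) = 2 * sineMoment N (k + 1) a (b + 1) := by
  rw [sineMoment, sineMoment, sineMoment, ← sum_add_distrib, mul_sum]
  refine sum_congr rfl fun ℓ _ => ?_
  set x := ℓ * π / N
  have := two_mul_sin_mul_cos ((b + 1 : ℕ) * x) x
  rw [show ((b + 1 : ℕ) : ℝ) * x - x = b * x by push_cast; ring,
    show ((b + 1 : ℕ) : ℝ) * x + x = (b + 2 : ℕ) * x by push_cast; ring] at this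
  linear_combination -(cos x ^ k * sin (a * x)) * this

theorem sineMoment_zero {N a b : ℕ} (ha : 0 < a) (ha' : a < N) (hb : 0 < b) (hb' : b < N) :
    sineMoment N 0 a b = if a = b then (N : ℝ) / 2 else 0 := by
  rw [← sum_range_sin_mul_sin ha ha' hb hb', sum_range_eq_add_Ico _ (by omega),
    ← Icc_sub_one_right_eq_Ico_of_not_isMin (by simp; omega)]
  simp [sineMoment]

theorem sineMoment_one_sub_one (N k : ℕ) :
    sineMoment N k 1 (N - 1) = ∑ ℓ ∈ Icc 1 (N - 1),
      (-1 : ℝ) ^ (ℓ + 1) * cos (ℓ * π / N) ^ k * sin (ℓ * π / N) ^ 2 := by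
  refine sum_congr rfl fun ℓ hℓ => ?_
  have hN : 1 ≤ N := by simp at hℓ; omega
  rw [Nat.cast_sub hN, Nat.cast_one, sub_one_mul,
    show (N : ℝ) * (ℓ * π / N) = ℓ * π by field_simp, sin_nat_mul_pi_sub, one_mul]
  ring

noncomputable def spectralEntry (N : ℕ) (s : ℝ) (k a b : ℕ) : ℝ :=
  s ^ b / s ^ a * (2 * s / (1 + s ^ 2)) ^ k * (2 / N * sineMoment N k a b)

theorem spectralEntry_succ {s : ℝ} (hs : s ≠ 0) (N k a b : ℕ) :
    spectralEntry N s (k + 1) a (b + 1) =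
      s ^ 2 / (1 + s ^ 2) * spectralEntry N s k a b +
        1 / (1 + s ^ 2) * spectralEntry N s k a (b + 2) := by
  rw [spectralEntry, show sineMoment N (k + 1) a (b + 1) =
    (sineMoment N k a b + sineMoment N k a (b + 2)) / 2 by
      rw [sineMoment_add_sineMoment_add_two]; ring]
  simp only [spectralEntry, pow_succ]
  have : 1 + s ^ 2 ≠ 0 := by positivity
  field_simp

theorem sum_mul_Ar_apply {N : ℕ} (r : ℝ) (f : ℕ → ℝ) (h₀ : f 0 = 0) (hN : f N = 0)
    (j : Fin (N - 1)) :
    ∑ m : Fin (N - 1), f ((m : ℕ) + 1) * Ar N r m j =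
      r / (1 + r) * f j + 1 / (1 + r) * f ((j : ℕ) + 2) := by
  have hAr (m : Fin (N - 1)) : f ((m : ℕ) + 1) * Ar N r m j =
      (if (m : ℕ) + 1 = j then r / (1 + r) * f ((m : ℕ) + 1) else 0) +
        (if (m : ℕ) = j + 1 then 1 / (1 + r) * f ((m : ℕ) + 1) else 0) := by
    unfold Ar
    split_ifs <;> first | omega | simp [mul_comm]
  simp only [hAr, sum_add_distrib]
  rw [Fin.sum_univ_eq_sum_range
      (fun m => if m + 1 = (j : ℕ) then r / (1 + r) * f (m + 1) else 0),
    Fin.sum_univ_eq_sum_range (fun m => if m = (j : ℕ) + 1 then 1 / (1 + r) * f (m + 1) else 0)]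
  obtain ⟨J, hJ⟩ := j
  dsimp only
  congr 1
  · cases J with
    | zero => simp [h₀]
    | succ J => simp [sum_ite_eq', show J + 1 < N by omega]
  · simp only [sum_ite_eq', mem_range]
    split_ifs with h
    · rfl
    · rw [show J + 2 = N by omega, hN, mul_zero]

theorem Ar_pow_apply {N : ℕ} {s : ℝ} (hs : s ≠ 0) (k : ℕ) (i j : Fin (N - 1)) :
    (Ar N (s ^ 2) ^ k) i j = spectralEntry N s k (i + 1) (j + 1) := by
  induction k generalizing j with
  | zero =>
    simp only [pow_zero, Matrix.one_apply, spectralEntry]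
    rw [sineMoment_zero (by omega) (by omega) (by omega) (by omega)]
    by_cases h : i = j
    · subst h
      have : (N : ℝ) ≠ 0 := Nat.cast_ne_zero.2 (by have := i.isLt; omega)
      rw [if_pos rfl, if_pos rfl]
      field_simp
    · simp [h, Fin.val_inj]
  | succ k ih =>
    rw [pow_succ, Matrix.mul_apply]
    simp_rw [ih]
    rw [sum_mul_Ar_apply _ (spectralEntry N s k (i + 1)), spectralEntry_succ hs]
    · simp [spectralEntry]
    · simp [spectralEntry, sineMoment_self_right (show N ≠ 0 by have := i.isLt; omega)]

/-- For `N ≥ 2`, `r > 0` and `k ≥ 0`,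
`(r/(1+r)) · (A(r)^k)_{1,N−1}
  = (r^{(N−1)/2}/N) · (2√r/(1+r))^{k+1} · ∑_{ℓ=1}^{N−1} (−1)^{ℓ+1} cos^k(ℓπ/N) sin²(ℓπ/N)`. -/
theorem stmt8 (N : ℕ) (hN : 2 ≤ N) (r : ℝ) (hr : 0 < r) (k : ℕ) :
    r / (1 + r) * (Ar N r ^ k) ⟨0, by omega⟩ ⟨N - 2, by omega⟩ =
      r ^ (((N : ℝ) - 1) / 2) / N * (2 * Real.sqrt r / (1 + r)) ^ (k + 1) *
        ∑ ℓ ∈ Finset.Icc 1 (N - 1),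
          (-1 : ℝ) ^ (ℓ + 1) * Real.cos (ℓ * Real.pi / N) ^ k *
            Real.sin (ℓ * Real.pi / N) ^ 2 := by
  obtain ⟨s, hs, rfl⟩ : ∃ s, 0 < s ∧ r = s ^ 2 :=
    ⟨√r, Real.sqrt_pos.2 hr, (Real.sq_sqrt hr.le).symm⟩
  have hpow : (s ^ 2) ^ (((N : ℝ) - 1) / 2) = s ^ (N - 1) := by
    rw [← Real.rpow_natCast s 2, ← Real.rpow_mul hs.le, ← Real.rpow_natCast,
      Nat.cast_sub (by omega : 1 ≤ N)]
    push_cast; ring_nf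
  rw [Ar_pow_apply hs.ne', spectralEntry, Real.sqrt_sq hs.le, hpow,
    show N - 2 + 1 = N - 1 by omega, sineMoment_one_sub_one]
  generalize (∑ ℓ ∈ Icc 1 (N - 1), _ : ℝ) = S
  have hN' : (N : ℝ) ≠ 0 := by positivity
  rw [pow_succ _ k, zero_add, pow_one]
  field_simp
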